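/- (Theorem 4.5, optimality of the maximum entropy model among frequency-based models.) Fix a collection of itemsets C = {X_1,…,X_k}, a dataset D, and let p*_C be a maximum-entropy distribution on T with p*_C(X_i = 1) = fr(X_i|D) for all i. Let r be a distribution on T with r(t) > 0 for all t ∈ T, and suppose that for any two nonempty finite datasets D_1, D_2 satisfying fr(X|D_1) = fr(X|D_2) for every X ∈ C, one has (1/|D_1|)·log₂ r(D_1) = (1/|D_2|)·log₂ r(D_2). Then p*_C(D) ≥ r(D). -/

import Mathlib

open scoped BigOperators

/-- A transaction over `N` items: an element of `{0,1}^N`. -/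
abbrev Transaction (N : ℕ) := Fin N → Bool

/-- A transaction `t` supports an itemset `X` iff `t i = 1` for all `i ∈ X`. -/
def supports {N : ℕ} (X : Finset (Fin N)) (t : Transaction N) : Prop :=
  ∀ i ∈ X, t i = true

instance {N : ℕ} (X : Finset (Fin N)) (t : Transaction N) : Decidable (supports X t) :=
  inferInstanceAs (Decidable (∀ i ∈ X, t i = true))

/-- A distribution on `{0,1}^N`: values in `[0,1]` summing to one. -/
def IsDistr {N : ℕ} (p : Transaction N → ℝ) : Prop :=
  (∀ t, 0 ≤ p t ∧ p t ≤ 1) ∧ ∑ t, p t = 1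

/-- `p(X = 1)`: the probability that a transaction supports `X`. -/
def probOne {N : ℕ} (p : Transaction N → ℝ) (X : Finset (Fin N)) : ℝ :=
  ∑ t, if supports X t then p t else 0

/-- Binary entropy `H(p) = -∑ p(t) log₂ p(t)` (with `0·log₂ 0 = 0`, as `Real.logb 2 0 = 0`). -/
noncomputable def entropy {N : ℕ} (p : Transaction N → ℝ) : ℝ :=
  - ∑ t, p t * Real.logb 2 (p t)

/-- Frequency of an itemset in a dataset (a multiset of transactions). -/
noncomputable def freq {N : ℕ} (X : Finset (Fin N)) (D : Multiset (Transaction N)) : ℝ :=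
  (D.countP (fun t => supports X t) : ℝ) / (Multiset.card D : ℝ)

/-- Likelihood of a dataset: `p(D) = ∏_{t ∈ D} p(t)`. -/
noncomputable def lhd {N : ℕ} (p : Transaction N → ℝ) (D : Multiset (Transaction N)) : ℝ :=
  (D.map p).prod

/-!
Let `q` be the empirical distribution of `D`. Comparing datasets whose count vectors differ by an
integer vector `w` shows that `log r` is orthogonal to every integer vector annihilated by the
indicator functions of `∅` and of the itemsets of `C`; clearing denominators and linear algebra
over `ℚ` then place `log r` in the real span of these indicators. Hence
`∑ q log r = ∑ p* log r`, which Gibbs' inequality bounds by `∑ p* log p*`. Maximality of the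
entropy of `p*` against the feasible mixtures `mₑ = (1 - ε) p* + ε q` gives
`∑ p* log p* ≤ ∑ q log mₑ`, so `r(D) ≤ mₑ(D)`, and `ε → 0` yields `r(D) ≤ p*(D)`.
-/

open Finset Matrix Real

namespace Multiset

variable {α : Type*} [Fintype α] [DecidableEq α]

theorem prod_map_eq_prod_univ_pow_count {M : Type*} [CommMonoid M] (D : Multiset α)
    (f : α → M) : (D.map f).prod = ∏ t, f t ^ D.count t := by
  rw [Finset.prod_multiset_map_count]
  exact Finset.prod_subset (subset_univ _) fun t _ ht => by
    rw [count_eq_zero.mpr (mt mem_toFinset.mpr ht), pow_zero]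

theorem countP_eq_sum_count (D : Multiset α) (P : α → Prop) [DecidablePred P] :
    D.countP P = ∑ t, if P t then D.count t else 0 := by
  simp_rw [countP_eq_card_filter, ← count_filter]
  exact (sum_count_eq_card fun t _ => mem_univ t).symm

end Multiset

theorem LinearMap.exists_comp_eq_of_ker_le {K V W M : Type*} [DivisionRing K]
    [AddCommGroup V] [Module K V] [AddCommGroup W] [Module K W] [AddCommGroup M] [Module K M]
    (f : V →ₗ[K] W) (g : V →ₗ[K] M) (h : ker f ≤ ker g) : ∃ ψ : W →ₗ[K] M, ψ ∘ₗ f = g := by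
  obtain ⟨l, hl⟩ := ((ker f).liftQ f le_rfl).exists_leftInverse_of_injective
    (Submodule.ker_liftQ_eq_bot' _ _ rfl)
  refine ⟨(ker f).liftQ g h ∘ₗ l, LinearMap.ext fun v => ?_⟩
  have hlv : l (f v) = (ker f).mkQ v := by simpa using LinearMap.congr_fun hl ((ker f).mkQ v)
  simp [hlv]

section LinearAlgebra

variable {ι κ : Type*} [Fintype ι] [Fintype κ]

theorem Matrix.exists_eq_vecMul_of_forall_rat (A : Matrix κ ι ℚ) (F : ι → ℝ)
    (hF : ∀ w : ι → ℚ, A *ᵥ w = 0 → (fun i => (w i : ℝ)) ⬝ᵥ F = 0) :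
    ∃ c : κ → ℝ, F = c ᵥ* A.map (↑) := by
  classical
  let φ : (ι → ℚ) →ₗ[ℚ] ℝ := ∑ i, (LinearMap.proj i).smulRight (F i)
  have hφ : ∀ w, φ w = (fun i => (w i : ℝ)) ⬝ᵥ F := fun w => by
    simp [φ, dotProduct, Rat.smul_def]
  obtain ⟨ψ, hψ⟩ := A.mulVecLin.exists_comp_eq_of_ker_le φ fun w hw => by
    simpa [hφ] using hF w hw
  refine ⟨fun k => ψ (Pi.single k 1), funext fun i => ?_⟩
  calc F i = φ (Pi.single i 1) := by simp [φ, Pi.single_apply]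
    _ = ψ (A.col i) := by simp [← hψ]
    _ = _ := by
      rw [LinearMap.pi_apply_eq_sum_univ]
      have hsingle (k : κ) : (fun j => if k = j then (1 : ℚ) else 0) = Pi.single k 1 :=
        funext fun j => by simp [Pi.single_apply, eq_comm]
      simp [vecMul, dotProduct, Rat.smul_def, mul_comm, hsingle]

theorem Matrix.exists_eq_vecMul_of_forall_int (A : Matrix κ ι ℤ) (F : ι → ℝ)
    (hF : ∀ w : ι → ℤ, A *ᵥ w = 0 → (fun i => (w i : ℝ)) ⬝ᵥ F = 0) :
    ∃ c : κ → ℝ, F = c ᵥ* A.map (↑) := by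
  suffices ∃ c : κ → ℝ, F = c ᵥ* (A.map ((↑) : ℤ → ℚ)).map (↑) by simpa [Matrix.map_map]
  refine (A.map (↑)).exists_eq_vecMul_of_forall_rat F fun w hw => ?_
  obtain ⟨b, hb⟩ := IsLocalization.exist_integer_multiples_of_finite (nonZeroDivisors ℤ) w
  choose z hz using hb
  have hz' : (Int.cast ∘ z : ι → ℚ) = (b : ℤ) • w :=
    funext fun i => by simpa [zsmul_eq_mul] using hz i
  have hAz : A *ᵥ z = 0 := funext fun k => by
    have := (Int.castRingHom ℚ).map_mulVec A z k
    rw [Int.coe_castRingHom, hz', mulVec_smul, hw] at this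
    simpa using this
  have hzw : (fun i => (z i : ℝ)) = (b : ℤ) • fun i => (w i : ℝ) := funext fun i => by
    simpa [zsmul_eq_mul] using congrArg (Rat.cast : ℚ → ℝ) (hz i)
  have := hF z hAz
  rw [hzw, smul_dotProduct, smul_eq_zero] at this
  exact this.resolve_left (nonZeroDivisors.coe_ne_zero b)

end LinearAlgebra

section Gibbs

variable {α : Type*} [Fintype α]

theorem mul_log_sub_mul_log_le {p r : ℝ} (hp : 0 ≤ p) (hr : 0 ≤ r) (hpr : 0 < p → 0 < r) :
    p * log r - p * log p ≤ r - p := by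
  rcases hp.eq_or_lt with rfl | hp
  · simpa using hr
  have hr := hpr hp
  have hlog := log_le_sub_one_of_pos (div_pos hr hp)
  rw [log_div hr.ne' hp.ne'] at hlog
  calc p * log r - p * log p = p * (log r - log p) := by ring
    _ ≤ p * (r / p - 1) := by gcongr
    _ = r - p := by field_simp

theorem sum_mul_logb_le_sum_mul_logb {b : ℝ} (hb : 1 < b) {p r : α → ℝ} (hp : ∀ t, 0 ≤ p t)
    (hr : ∀ t, 0 ≤ r t) (hpr : ∀ t, 0 < p t → 0 < r t) (hrp : ∑ t, r t ≤ ∑ t, p t) :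
    ∑ t, p t * logb b (r t) ≤ ∑ t, p t * logb b (p t) := by
  simp_rw [logb, ← mul_div_assoc, ← Finset.sum_div]
  gcongr ?_ / _
  · exact (log_pos hb).le
  have := Finset.sum_le_sum fun t (_ : t ∈ univ) => mul_log_sub_mul_log_le (hp t) (hr t) (hpr t)
  simp only [Finset.sum_sub_distrib] at this
  linarith

theorem sum_mul_logb_le_sum_mul_logb_mix {b : ℝ} (hb : 1 < b) {p q : α → ℝ}
    (hp : ∀ t, 0 ≤ p t) (hq : ∀ t, 0 ≤ q t) (hqp : ∑ t, q t ≤ ∑ t, p t) {ε : ℝ}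
    (hε : ε ∈ Set.Ioo (0 : ℝ) 1)
    (hmin : ∑ t, p t * logb b (p t) ≤
      ∑ t, ((1 - ε) • p + ε • q) t * logb b (((1 - ε) • p + ε • q) t)) :
    ∑ t, p t * logb b (p t) ≤ ∑ t, q t * logb b (((1 - ε) • p + ε • q) t) := by
  obtain ⟨hε0, hε1⟩ := hε
  set m := (1 - ε) • p + ε • q
  have hm (t : α) : m t = (1 - ε) * p t + ε * q t := rfl
  have hm_nonneg (t : α) : 0 ≤ m t := by rw [hm]; have := hp t; have := hq t; positivity
  have hsplit : ∑ t, m t * logb b (m t) =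
      (1 - ε) * ∑ t, p t * logb b (m t) + ε * ∑ t, q t * logb b (m t) := by
    simp only [Finset.mul_sum, ← Finset.sum_add_distrib]
    exact Finset.sum_congr rfl fun t _ => by rw [hm]; ring
  have hgibbs : ∑ t, p t * logb b (m t) ≤ ∑ t, p t * logb b (p t) := by
    refine sum_mul_logb_le_sum_mul_logb hb hp hm_nonneg (fun t ht => ?_) ?_
    · rw [hm]; have := hq t; have : 0 < 1 - ε := by linarith
      positivity
    · simp only [hm, Finset.sum_add_distrib, ← Finset.mul_sum]
      nlinarith
  have hε_mul : ε * ∑ t, p t * logb b (p t) ≤ ε * ∑ t, q t * logb b (m t) := by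
    nlinarith [mul_le_mul_of_nonneg_left hgibbs (by linarith : 0 ≤ 1 - ε)]
  exact le_of_mul_le_mul_left hε_mul hε0

end Gibbs

noncomputable def empirical {α : Type*} [DecidableEq α] (D : Multiset α) (t : α) : ℝ :=
  D.count t / Multiset.card D

section Empirical

variable {α : Type*} [DecidableEq α] (D : Multiset α)

theorem card_mul_empirical (t : α) : (Multiset.card D : ℝ) * empirical D t = D.count t := by
  rcases eq_or_ne D 0 with rfl | hD
  · simp
  · have : (Multiset.card D : ℝ) ≠ 0 := by simpa using hD
    unfold empirical
    field_simp

theorem empirical_pos {t : α} (ht : t ∈ D) : 0 < empirical D t :=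
  div_pos (by exact_mod_cast Multiset.count_pos.mpr ht)
    (by exact_mod_cast Multiset.card_pos_iff_exists_mem.mpr ⟨t, ht⟩)

theorem mem_stdSimplex_empirical [Fintype α] (hD : D ≠ 0) : empirical D ∈ stdSimplex ℝ α := by
  refine ⟨fun t => by unfold empirical; positivity, ?_⟩
  have : (Multiset.card D : ℝ) ≠ 0 := by simpa using hD
  simp_rw [empirical, ← Finset.sum_div]
  rw [div_eq_one_iff_eq this]
  exact_mod_cast Multiset.sum_count_eq_card fun t _ => mem_univ t

end Empirical

section Transactions

variable {N : ℕ}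

theorem isDistr_iff_mem_stdSimplex {p : Transaction N → ℝ} :
    IsDistr p ↔ p ∈ stdSimplex ℝ (Transaction N) :=
  ⟨fun h => ⟨fun t => (h.1 t).1, h.2⟩, fun h => ⟨mem_Icc_of_mem_stdSimplex h, h.2⟩⟩

theorem IsDistr.mix {p q : Transaction N → ℝ} (hp : IsDistr p) (hq : IsDistr q) {ε : ℝ}
    (hε : ε ∈ Set.Icc (0 : ℝ) 1) : IsDistr ((1 - ε) • p + ε • q) := by
  rw [isDistr_iff_mem_stdSimplex] at hp hq ⊢
  exact convex_stdSimplex ℝ _ hp hq (by linarith [hε.2]) hε.1 (by ring)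

theorem probOne_add (p q : Transaction N → ℝ) (X : Finset (Fin N)) :
    probOne (p + q) X = probOne p X + probOne q X := by
  simp only [probOne, Pi.add_apply, ← Finset.sum_add_distrib, ← ite_add_zero]

theorem probOne_smul (c : ℝ) (p : Transaction N → ℝ) (X : Finset (Fin N)) :
    probOne (c • p) X = c * probOne p X := by
  simp [probOne, Finset.mul_sum]

theorem supports_empty (t : Transaction N) : supports ∅ t := by
  simp [supports]

theorem probOne_empty (p : Transaction N → ℝ) : probOne p ∅ = ∑ t, p t := by
  simp [probOne, supports_empty]

theorem freq_eq_probOne_empirical (X : Finset (Fin N)) (D : Multiset (Transaction N)) :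
    freq X D = probOne (empirical D) X := by
  simp [freq, probOne, empirical, Multiset.countP_eq_sum_count, Finset.sum_div, ite_div]

theorem isDistr_empirical {D : Multiset (Transaction N)} (hD : D ≠ 0) : IsDistr (empirical D) :=
  isDistr_iff_mem_stdSimplex.mpr (mem_stdSimplex_empirical D hD)

theorem logb_lhd (b : ℝ) {f : Transaction N → ℝ} {D : Multiset (Transaction N)}
    (hf : ∀ t ∈ D, f t ≠ 0) : logb b (lhd f D) = ∑ t, D.count t * logb b (f t) := by
  rw [lhd, Multiset.prod_map_eq_prod_univ_pow_count, logb_prod]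
  · simp [logb_pow]
  · intro t _
    by_cases ht : t ∈ D
    · exact pow_ne_zero _ (hf t ht)
    · simp [Multiset.count_eq_zero.mpr ht]

theorem lhd_pos {f : Transaction N → ℝ} {D : Multiset (Transaction N)} (hf : ∀ t ∈ D, 0 < f t) :
    0 < lhd f D :=
  Multiset.prod_pos fun _ h => by
    obtain ⟨t, ht, rfl⟩ := Multiset.mem_map.mp h
    exact hf t ht

theorem lhd_le_lhd_of_sum_empirical_mul_logb_le {f g : Transaction N → ℝ}
    {D : Multiset (Transaction N)} (hf : ∀ t ∈ D, 0 < f t) (hg : ∀ t ∈ D, 0 < g t)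
    (h : ∑ t, empirical D t * logb 2 (f t) ≤ ∑ t, empirical D t * logb 2 (g t)) :
    lhd f D ≤ lhd g D := by
  have hlogb (u : Transaction N → ℝ) (hu : ∀ t ∈ D, 0 < u t) :
      logb 2 (lhd u D) = Multiset.card D * ∑ t, empirical D t * logb 2 (u t) := by
    simp_rw [logb_lhd 2 fun t ht => (hu t ht).ne', Finset.mul_sum, ← mul_assoc,
      card_mul_empirical]
  rw [← logb_le_logb one_lt_two (lhd_pos hf) (lhd_pos hg), hlogb f hf, hlogb g hg]
  gcongr

theorem le_lhd_of_forall_le_lhd_mix {p q : Transaction N → ℝ} {D : Multiset (Transaction N)}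
    {a : ℝ} (h : ∀ ε ∈ Set.Ioo (0 : ℝ) 1, a ≤ lhd ((1 - ε) • p + ε • q) D) : a ≤ lhd p D := by
  have hcont : Continuous fun ε : ℝ => lhd ((1 - ε) • p + ε • q) D :=
    continuous_multiset_prod D fun t _ => by fun_prop
  have := hcont.tendsto 0
  simp only [sub_zero, one_smul, zero_smul, add_zero] at this
  exact ge_of_tendsto (this.mono_left nhdsWithin_le_nhds)
    (Filter.eventually_of_mem (Ioo_mem_nhdsGT one_pos) h)

end Transactions

section FrequencyBased

variable {N : ℕ}

def supportMatrix (R : Type*) [Zero R] [One R] (C : Finset (Finset (Fin N))) :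
    Matrix C (Transaction N) R :=
  Matrix.of fun X t => if supports X t then 1 else 0

theorem supportMatrix_mulVec_apply {R : Type*} [NonAssocSemiring R] (C : Finset (Finset (Fin N)))
    (u : Transaction N → R) (X : C) :
    (supportMatrix R C *ᵥ u) X = ∑ t, if supports X t then u t else 0 := by
  simp [supportMatrix, mulVec, dotProduct, ite_mul]

theorem supportMatrix_map {R : Type*} [Ring R] (C : Finset (Finset (Fin N))) :
    (supportMatrix ℤ C).map ((↑) : ℤ → R) = supportMatrix R C := by
  ext X t
  simp [supportMatrix]

theorem supportMatrix_mulVec_count (C : Finset (Finset (Fin N))) (D : Multiset (Transaction N))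
    (X : C) : (supportMatrix ℤ C *ᵥ fun t => (D.count t : ℤ)) X = D.countP (supports X) := by
  simp [supportMatrix_mulVec_apply, Multiset.countP_eq_sum_count, apply_ite]

def IsFrequencyBased (C : Finset (Finset (Fin N))) (r : Transaction N → ℝ) : Prop :=
  ∀ D1 D2 : Multiset (Transaction N), D1 ≠ 0 → D2 ≠ 0 → (∀ X ∈ C, freq X D1 = freq X D2) →
    (1 / (Multiset.card D1 : ℝ)) * logb 2 (lhd r D1) =
      (1 / (Multiset.card D2 : ℝ)) * logb 2 (lhd r D2)

namespace IsFrequencyBased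

variable {C : Finset (Finset (Fin N))} {r : Transaction N → ℝ}

theorem sum_count_mul_logb_eq (hr : IsFrequencyBased C r) (hrpos : ∀ t, 0 < r t)
    {D1 D2 : Multiset (Transaction N)} (hD1 : D1 ≠ 0) (hD2 : D2 ≠ 0)
    (hcount : supportMatrix ℤ (insert ∅ C) *ᵥ (fun t => (D1.count t : ℤ)) =
      supportMatrix ℤ (insert ∅ C) *ᵥ fun t => (D2.count t : ℤ)) :
    ∑ t, D1.count t * logb 2 (r t) = ∑ t, D2.count t * logb 2 (r t) := by
  have hcountP (X) (hX : X ∈ insert ∅ C) : D1.countP (supports X) = D2.countP (supports X) := by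
    exact_mod_cast (supportMatrix_mulVec_count _ D1 ⟨X, hX⟩).symm.trans
      ((congrFun hcount ⟨X, hX⟩).trans (supportMatrix_mulVec_count _ D2 ⟨X, hX⟩))
  -- the row of `∅` counts every transaction
  have hcard : Multiset.card D1 = Multiset.card D2 := by
    simpa only [Multiset.countP_eq_card.mpr fun t _ => supports_empty t]
      using hcountP ∅ (mem_insert_self ∅ C)
  have hfreq (X) (hX : X ∈ C) : freq X D1 = freq X D2 := by
    simp only [freq, hcountP X (mem_insert_of_mem hX), hcard]
  have h := hr D1 D2 hD1 hD2 hfreq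
  rw [hcard, mul_right_inj' (by simpa using hD2)] at h
  rwa [logb_lhd 2 fun t _ => (hrpos t).ne', logb_lhd 2 fun t _ => (hrpos t).ne'] at h

theorem dotProduct_logb_eq_zero (hr : IsFrequencyBased C r) (hrpos : ∀ t, 0 < r t)
    (w : Transaction N → ℤ) (hw : supportMatrix ℤ (insert ∅ C) *ᵥ w = 0) :
    (fun t => (w t : ℝ)) ⬝ᵥ (fun t => logb 2 (r t)) = 0 := by
  let ofCounts (c : Transaction N → ℕ) : Multiset (Transaction N) :=
    Finsupp.toMultiset (Finsupp.equivFunOnFinite.symm c)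
  have hcount (c : Transaction N → ℕ) (t : Transaction N) : (ofCounts c).count t = c t := by
    simp [ofCounts]
  have hne (c : Transaction N → ℕ) (hc : ∀ t, 0 < c t) : ofCounts c ≠ 0 := fun h =>
    (hc fun _ => false).ne' (by simpa [h] using (hcount c fun _ => false).symm)
  -- compare the dataset with counts `w + s` to the one with constant count `s`
  set s : ℕ := ∑ t, (w t).natAbs + 1
  have hs (t : Transaction N) : 0 < w t + s := by
    have := Finset.single_le_sum (fun t _ => (w t).natAbs.zero_le) (mem_univ t)
    omega
  set c := fun t => (w t + s).toNat
  have hc (t : Transaction N) : (c t : ℤ) = w t + s := Int.toNat_of_nonneg (hs t).le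
  have h := hr.sum_count_mul_logb_eq hrpos (D1 := ofCounts c) (D2 := ofCounts fun _ => s)
    (hne c fun t => by have := hc t; have := hs t; omega) (hne _ fun _ => by simp [s]) ?_
  · have hcR (t : Transaction N) : (c t : ℝ) = w t + s := by exact_mod_cast hc t
    simp only [hcount, hcR, add_mul, Finset.sum_add_distrib] at h
    simpa [dotProduct] using h
  · have : (fun t => (c t : ℤ)) = w + fun _ => (s : ℤ) := funext hc
    simp only [hcount, this, mulVec_add, hw, zero_add]

theorem sum_mul_logb_eq (hr : IsFrequencyBased C r) (hrpos : ∀ t, 0 < r t)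
    {u v : Transaction N → ℝ} (h : ∀ X ∈ insert ∅ C, probOne u X = probOne v X) :
    ∑ t, u t * logb 2 (r t) = ∑ t, v t * logb 2 (r t) := by
  obtain ⟨c, hc⟩ := (supportMatrix ℤ (insert ∅ C)).exists_eq_vecMul_of_forall_int _
    (hr.dotProduct_logb_eq_zero hrpos)
  rw [supportMatrix_map] at hc
  have hmoments : supportMatrix ℝ (insert ∅ C) *ᵥ u = supportMatrix ℝ (insert ∅ C) *ᵥ v :=
    funext fun X => by rw [supportMatrix_mulVec_apply, supportMatrix_mulVec_apply]; exact h X X.2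
  change u ⬝ᵥ _ = v ⬝ᵥ _
  rw [hc, dotProduct_comm u, dotProduct_comm v, ← dotProduct_mulVec, ← dotProduct_mulVec,
    hmoments]

end IsFrequencyBased

end FrequencyBased

theorem maxent_optimal_among_frequency_models_general {N : ℕ}
    (C : Finset (Finset (Fin N)))
    (D : Multiset (Transaction N)) (hD : D ≠ 0)
    -- `p*_C` is a maximum-entropy distribution consistent with `D` for `C`:
    (pstar : Transaction N → ℝ) (hpstar : IsDistr pstar)
    (hcons : ∀ X ∈ C, probOne pstar X = freq X D)
    (hmax : ∀ q : Transaction N → ℝ, IsDistr q → (∀ X ∈ C, probOne q X = freq X D) →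
      entropy q ≤ entropy pstar)
    -- `r` is an alternative model whose per-transaction log-likelihood depends
    -- only on the frequencies of `C`:
    (r : Transaction N → ℝ) (hr : IsDistr r) (hrpos : ∀ t, 0 < r t)
    (hinv : ∀ D1 D2 : Multiset (Transaction N), D1 ≠ 0 → D2 ≠ 0 →
      (∀ X ∈ C, freq X D1 = freq X D2) →
      (1 / (Multiset.card D1 : ℝ)) * Real.logb 2 (lhd r D1) =
        (1 / (Multiset.card D2 : ℝ)) * Real.logb 2 (lhd r D2)) :
    lhd r D ≤ lhd pstar D := by
  set q := empirical D
  have hq : IsDistr q := isDistr_empirical hD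
  have hq_cons (X) (hX : X ∈ C) : probOne q X = probOne pstar X := by
    rw [hcons X hX, freq_eq_probOne_empirical]
  have hr_moments : ∑ t, q t * logb 2 (r t) = ∑ t, pstar t * logb 2 (r t) :=
    IsFrequencyBased.sum_mul_logb_eq hinv hrpos fun X hX => by
      rcases mem_insert.mp hX with rfl | hX
      · rw [probOne_empty, probOne_empty, hq.2, hpstar.2]
      · exact hq_cons X hX
  have hr_gibbs : ∑ t, pstar t * logb 2 (r t) ≤ ∑ t, pstar t * logb 2 (pstar t) :=
    sum_mul_logb_le_sum_mul_logb one_lt_two (fun t => (hpstar.1 t).1) (fun t => (hrpos t).le)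
      (fun t _ => hrpos t) (by rw [hr.2, hpstar.2])
  refine le_lhd_of_forall_le_lhd_mix (q := q) fun ε hε => ?_
  have hm : IsDistr ((1 - ε) • pstar + ε • q) := hpstar.mix hq (Set.Ioo_subset_Icc_self hε)
  have hm_cons (X) (hX : X ∈ C) : probOne ((1 - ε) • pstar + ε • q) X = freq X D := by
    rw [probOne_add, probOne_smul, probOne_smul, hq_cons X hX, hcons X hX]
    ring
  have hpstar_le := hmax _ hm hm_cons
  unfold entropy at hpstar_le
  have hcross := sum_mul_logb_le_sum_mul_logb_mix one_lt_two (fun t => (hpstar.1 t).1)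
    (fun t => (hq.1 t).1) (by rw [hq.2, hpstar.2]) hε (neg_le_neg_iff.mp hpstar_le)
  refine lhd_le_lhd_of_sum_empirical_mul_logb_le (fun t _ => hrpos t) (fun t ht => ?_) (by linarith)
  exact add_pos_of_nonneg_of_pos (mul_nonneg (by linarith [hε.2]) (hpstar.1 t).1)
    (mul_pos hε.1 (empirical_pos D ht))

/-- Theorem 4.5: optimality of the maximum entropy model among models
parametrized by the frequencies of `C`. -/
theorem maxent_optimal_among_frequency_models {N : ℕ} (hN : 1 ≤ N)
    (C : Finset (Finset (Fin N)))
    (D : Multiset (Transaction N)) (hD : D ≠ 0)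
    -- `p*_C` is a maximum-entropy distribution consistent with `D` for `C`:
    (pstar : Transaction N → ℝ) (hpstar : IsDistr pstar)
    (hcons : ∀ X ∈ C, probOne pstar X = freq X D)
    (hmax : ∀ q : Transaction N → ℝ, IsDistr q → (∀ X ∈ C, probOne q X = freq X D) →
      entropy q ≤ entropy pstar)
    -- `r` is an alternative model whose per-transaction log-likelihood depends
    -- only on the frequencies of `C`:
    (r : Transaction N → ℝ) (hr : IsDistr r) (hrpos : ∀ t, 0 < r t)
    (hinv : ∀ D1 D2 : Multiset (Transaction N), D1 ≠ 0 → D2 ≠ 0 →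
      (∀ X ∈ C, freq X D1 = freq X D2) →
      (1 / (Multiset.card D1 : ℝ)) * Real.logb 2 (lhd r D1) =
        (1 / (Multiset.card D2 : ℝ)) * Real.logb 2 (lhd r D2)) :
    lhd r D ≤ lhd pstar D :=
  maxent_optimal_among_frequency_models_general C D hD pstar hpstar hcons hmax r hr hrpos hinv
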